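/- The theory HA + ¬θ + MP is consistent and has the existence property (if HA + ¬θ + MP ⊢_i ∃x ψ(x) for an L-sentence ∃x ψ(x), then HA + ¬θ + MP ⊢_i ψ(n̄) for some natural number n) and the disjunction property (if HA + ¬θ + MP ⊢_i φ ∨ ψ for L-sentences φ, ψ, then HA + ¬θ + MP ⊢_i φ or HA + ¬θ + MP ⊢_i ψ). -/

import Mathlib

/- Common framework: syntax and semantics (classical and Kripke) for the language L
of Primitive Recursive Arithmetic, with intuitionistic/classical natural deduction,
Heyting/Peano arithmetic, realizability-related schemata (ECT₀, MP),
diagrams, provability predicates and universal Kripke models. -/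

namespace Pap

/-- Syntactic codes ("symbols") of primitive recursive functions: the language L
has a function symbol for every primitive recursive function. -/
inductive PRCode : ℕ → Type
  | zero : PRCode 0
  | succ : PRCode 1
  | proj : {n : ℕ} → Fin n → PRCode n
  | comp : {m n : ℕ} → PRCode m → (Fin m → PRCode n) → PRCode n
  | prec : {n : ℕ} → PRCode n → PRCode (n + 2) → PRCode (n + 1)

/-- The primitive recursive function denoted by a code. -/
def PRCode.eval : {n : ℕ} → PRCode n → (Fin n → ℕ) → ℕ
  | _, .zero, _ => 0
  | _, .succ, v => v 0 + 1
  | _, .proj i, v => v i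
  | _, .comp g h, v => g.eval fun i => (h i).eval v
  | _, .prec g h, v =>
      Nat.rec (motive := fun _ => ℕ) (g.eval fun i => v i.succ)
        (fun y ih => h.eval (Fin.cons y (Fin.cons ih fun i => v i.succ))) (v 0)

/-- Terms of L augmented with constants from `C` (take `C := Empty` for L itself,
and `C := M` for the language L(M)).  Variables are de Bruijn indices. -/
inductive Term (C : Type) : Type
  | var : ℕ → Term C
  | const : C → Term C
  | func : {n : ℕ} → PRCode n → (Fin n → Term C) → Term C

/-- Formulas of L(C), with de Bruijn-style quantifiers (the only relation is `=`). -/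
inductive Formula (C : Type) : Type
  | falsum : Formula C
  | eq : Term C → Term C → Formula C
  | conj : Formula C → Formula C → Formula C
  | disj : Formula C → Formula C → Formula C
  | impl : Formula C → Formula C → Formula C
  | all : Formula C → Formula C
  | ex : Formula C → Formula C

variable {C D : Type}

def Formula.neg (φ : Formula C) : Formula C := φ.impl .falsum

def Formula.iff (φ ψ : Formula C) : Formula C := (φ.impl ψ).conj (ψ.impl φ)

/-- Simultaneous substitution in terms. -/
def Term.subst (σ : ℕ → Term C) : Term C → Term C
  | .var n => σ n
  | .const c => .const c
  | .func f ts => .func f fun i => (ts i).subst σ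

/-- Shift all variables up by one. -/
def Term.shift : Term C → Term C := Term.subst fun n => .var (n + 1)

/-- Lift a substitution under a binder. -/
def liftSubst (σ : ℕ → Term C) : ℕ → Term C
  | 0 => .var 0
  | n + 1 => (σ n).shift

/-- Simultaneous substitution in formulas. -/
def Formula.subst (σ : ℕ → Term C) : Formula C → Formula C
  | .falsum => .falsum
  | .eq t u => .eq (t.subst σ) (u.subst σ)
  | .conj φ ψ => .conj (φ.subst σ) (ψ.subst σ)
  | .disj φ ψ => .disj (φ.subst σ) (ψ.subst σ)
  | .impl φ ψ => .impl (φ.subst σ) (ψ.subst σ)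
  | .all φ => .all (φ.subst (liftSubst σ))
  | .ex φ => .ex (φ.subst (liftSubst σ))

/-- Shift all free variables of a formula up by one. -/
def Formula.shiftF : Formula C → Formula C := Formula.subst fun n => .var (n + 1)

/-- Substitute the term `t` for the variable `0` (lowering the other variables). -/
def subst0 (t : Term C) (φ : Formula C) : Formula C :=
  φ.subst fun n => match n with
    | 0 => t
    | m + 1 => .var m

/-- All free variables of a term are `< k`. -/
def Term.fvBelow (k : ℕ) : Term C → Prop
  | .var n => n < k
  | .const _ => True
  | .func _ ts => ∀ i, (ts i).fvBelow k

/-- All free variables of a formula are `< k`. -/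
def Formula.fvBelow : ℕ → Formula C → Prop
  | _, .falsum => True
  | k, .eq t u => t.fvBelow k ∧ u.fvBelow k
  | k, .conj φ ψ => φ.fvBelow k ∧ ψ.fvBelow k
  | k, .disj φ ψ => φ.fvBelow k ∧ ψ.fvBelow k
  | k, .impl φ ψ => φ.fvBelow k ∧ ψ.fvBelow k
  | k, .all φ => φ.fvBelow (k + 1)
  | k, .ex φ => φ.fvBelow (k + 1)

/-- A sentence is a formula with no free variables. -/
def Formula.IsClosed (φ : Formula C) : Prop := φ.fvBelow 0

/-- The variable `k` occurs free in a term. -/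
def Term.freeIn (k : ℕ) : Term C → Prop
  | .var n => n = k
  | .const _ => False
  | .func _ ts => ∃ i, (ts i).freeIn k

/-- The variable `k` occurs free in a formula. -/
def Formula.freeIn : ℕ → Formula C → Prop
  | _, .falsum => False
  | k, .eq t u => t.freeIn k ∨ u.freeIn k
  | k, .conj φ ψ => φ.freeIn k ∨ ψ.freeIn k
  | k, .disj φ ψ => φ.freeIn k ∨ ψ.freeIn k
  | k, .impl φ ψ => φ.freeIn k ∨ ψ.freeIn k
  | k, .all φ => φ.freeIn (k + 1)
  | k, .ex φ => φ.freeIn (k + 1)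

/-- Map constants along a function. -/
def Term.mapC (g : C → D) : Term C → Term D
  | .var n => .var n
  | .const c => .const (g c)
  | .func f ts => .func f fun i => (ts i).mapC g

def Formula.mapC (g : C → D) : Formula C → Formula D
  | .falsum => .falsum
  | .eq t u => .eq (t.mapC g) (u.mapC g)
  | .conj φ ψ => .conj (φ.mapC g) (ψ.mapC g)
  | .disj φ ψ => .disj (φ.mapC g) (ψ.mapC g)
  | .impl φ ψ => .impl (φ.mapC g) (ψ.mapC g)
  | .all φ => .all (φ.mapC g)
  | .ex φ => .ex (φ.mapC g)

/-- View an L-formula as an L(C)-formula. -/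
def ofL : Formula Empty → Formula C := Formula.mapC fun e => e.elim

/-! ### Natural deduction, intuitionistic (`cl := False`) and classical (`cl := True`) -/

inductive Derives (cl : Prop) : Set (Formula C) → Formula C → Prop
  | hyp {Γ : Set (Formula C)} {φ : Formula C} : φ ∈ Γ → Derives cl Γ φ
  | implI {Γ} {φ ψ : Formula C} : Derives cl (insert φ Γ) ψ → Derives cl Γ (φ.impl ψ)
  | implE {Γ} {φ ψ : Formula C} :
      Derives cl Γ (φ.impl ψ) → Derives cl Γ φ → Derives cl Γ ψ
  | conjI {Γ} {φ ψ : Formula C} :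
      Derives cl Γ φ → Derives cl Γ ψ → Derives cl Γ (φ.conj ψ)
  | conjE1 {Γ} {φ ψ : Formula C} : Derives cl Γ (φ.conj ψ) → Derives cl Γ φ
  | conjE2 {Γ} {φ ψ : Formula C} : Derives cl Γ (φ.conj ψ) → Derives cl Γ ψ
  | disjI1 {Γ} {φ ψ : Formula C} : Derives cl Γ φ → Derives cl Γ (φ.disj ψ)
  | disjI2 {Γ} {φ ψ : Formula C} : Derives cl Γ ψ → Derives cl Γ (φ.disj ψ)
  | disjE {Γ} {φ ψ χ : Formula C} :
      Derives cl Γ (φ.disj ψ) → Derives cl (insert φ Γ) χ → Derives cl (insert ψ Γ) χ →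
      Derives cl Γ χ
  | falsumE {Γ} {φ : Formula C} : Derives cl Γ .falsum → Derives cl Γ φ
  | allI {Γ} {φ : Formula C} :
      Derives cl (Formula.shiftF '' Γ) φ → Derives cl Γ (.all φ)
  | allE {Γ} {φ : Formula C} (t : Term C) :
      Derives cl Γ (.all φ) → Derives cl Γ (subst0 t φ)
  | exI {Γ} {φ : Formula C} (t : Term C) :
      Derives cl Γ (subst0 t φ) → Derives cl Γ (.ex φ)
  | exE {Γ} {φ χ : Formula C} :
      Derives cl Γ (.ex φ) →
      Derives cl (insert φ (Formula.shiftF '' Γ)) (Formula.shiftF χ) → Derives cl Γ χ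
  | eqRefl {Γ} (t : Term C) : Derives cl Γ (.eq t t)
  | eqSubst {Γ} {φ : Formula C} (t u : Term C) :
      Derives cl Γ (.eq t u) → Derives cl Γ (subst0 t φ) → Derives cl Γ (subst0 u φ)
  | dne {Γ} {φ : Formula C} :
      cl → Derives cl Γ (Formula.neg (Formula.neg φ)) → Derives cl Γ φ

/-- Intuitionistic provability `T ⊢ᵢ φ`. -/
def iProves (T : Set (Formula C)) (φ : Formula C) : Prop := Derives False T φ

/-- Classical provability `T ⊢_c φ`. -/
def cProves (T : Set (Formula C)) (φ : Formula C) : Prop := Derives True T φ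

/-- Consistency of an intuitionistic theory. -/
def IConsistent (T : Set (Formula C)) : Prop := ¬ iProves T .falsum

/-! ### Classical structures and Tarski satisfaction -/

/-- A classical L-structure: interprets every function symbol of L. -/
structure Struc where
  carrier : Type
  interp : {n : ℕ} → PRCode n → (Fin n → carrier) → carrier

/-- Extend a valuation by one value (for the fresh de Bruijn variable 0). -/
def vcons {α : Type*} (a : α) (v : ℕ → α) : ℕ → α
  | 0 => a
  | n + 1 => v n

def Term.val (S : Struc) (cI : C → S.carrier) (v : ℕ → S.carrier) : Term C → S.carrier
  | .var n => v n
  | .const c => cI c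
  | .func f ts => S.interp f fun i => (ts i).val S cI v

def Formula.Sat (S : Struc) (cI : C → S.carrier) : (ℕ → S.carrier) → Formula C → Prop
  | _, .falsum => False
  | v, .eq t u => t.val S cI v = u.val S cI v
  | v, .conj φ ψ => φ.Sat S cI v ∧ ψ.Sat S cI v
  | v, .disj φ ψ => φ.Sat S cI v ∨ ψ.Sat S cI v
  | v, .impl φ ψ => φ.Sat S cI v → ψ.Sat S cI v
  | v, .all φ => ∀ a, φ.Sat S cI (vcons a v)
  | v, .ex φ => ∃ a, φ.Sat S cI (vcons a v)

/-- `M ⊨ φ` for an L-formula `φ` (under all valuations). -/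
def Struc.ModelsL (S : Struc) (φ : Formula Empty) : Prop :=
  ∀ v, Formula.Sat S (fun e => e.elim) v φ

def Struc.ModelsLSet (S : Struc) (T : Set (Formula Empty)) : Prop :=
  ∀ φ ∈ T, S.ModelsL φ

/-- `M ⊨ φ` for an L(M)-formula `φ`. -/
def Struc.ModelsM (S : Struc) (φ : Formula S.carrier) : Prop :=
  ∀ v, Formula.Sat S id v φ

/-- The standard model ℕ. -/
def stdModel : Struc := { carrier := ℕ, interp := fun f v => f.eval v }

/-! ### Arithmetical vocabulary and axioms -/

def zeroT : Term C := .func .zero ![]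

def succT (t : Term C) : Term C := .func .succ fun _ => t

/-- Numerals. -/
def numeral : ℕ → Term C
  | 0 => zeroT
  | n + 1 => succT (numeral n)

def varsF (n : ℕ) : Fin n → Term C := fun i => .var i.1

/-- `closeN k φ` = `∀`-closure of the first `k` variables. -/
def closeN : ℕ → Formula C → Formula C
  | 0, φ => φ
  | k + 1, φ => closeN k (.all φ)

/-- Axioms of Robinson arithmetic Q (the part about `0` and successor; the
recursion equations of `+`, `·` and all other primitive recursive function
symbols are provided by `prDefAx`). -/
def QAx : Set (Formula Empty) :=
  { Formula.all ((Formula.eq (succT (.var 0)) zeroT).neg),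
    Formula.all (.all ((Formula.eq (succT (.var 1)) (succT (.var 0))).impl
      (.eq (.var 1) (.var 0)))),
    Formula.all ((Formula.eq (.var 0) zeroT).disj
      (.ex (.eq (.var 1) (succT (.var 0))))) }

/-- The defining axioms of a primitive recursive function symbol. -/
def PRCode.defAx : {n : ℕ} → PRCode n → List (Formula Empty)
  | _, .zero => []
  | _, .succ => []
  | n, .proj i => [closeN n (.eq (.func (.proj i) (varsF n)) (.var i.1))]
  | _, @PRCode.comp m n g h =>
      [closeN n (.eq (.func (.comp g h) (varsF n)) (.func g fun i => .func (h i) (varsF n)))]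
  | _, @PRCode.prec n g h =>
      [ closeN n (.eq (.func (.prec g h) (Fin.cons zeroT (varsF n))) (.func g (varsF n))),
        closeN (n + 1) (.eq
          (.func (.prec g h) (Fin.cons (succT (.var 0)) fun i : Fin n => .var (i.1 + 1)))
          (.func h (Fin.cons (.var 0) (Fin.cons
            (.func (.prec g h) (Fin.cons (.var 0) fun i : Fin n => .var (i.1 + 1)))
            fun i : Fin n => .var (i.1 + 1))))) ]

/-- Defining axioms of all primitive recursive functions. -/
def prDefAx : Set (Formula Empty) :=
  {φ | ∃ (n : ℕ) (c : PRCode n), φ ∈ c.defAx}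

/-- `I_φ := φ(0) ∧ ∀x(φ(x) → φ(Sx)) → ∀x φ(x)`, induction on variable `0`. -/
def indBody (φ : Formula C) : Formula C :=
  ((subst0 zeroT φ).conj (.all (φ.impl (φ.subst fun n => match n with
      | 0 => succT (.var 0)
      | m + 1 => .var (m + 1))))).impl (.all φ)

/-- The full induction schema (universally closed). -/
def indAxioms : Set (Formula Empty) :=
  {ψ | ∃ (φ : Formula Empty) (k : ℕ), ψ = closeN k (indBody φ)}

/-- Induction for atomic formulas. -/
def atomIndAxioms : Set (Formula Empty) :=
  {ψ | ∃ (t u : Term Empty) (k : ℕ), ψ = closeN k (indBody (.eq t u))}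

/-- The (non-logical) axioms of HA (and of PA). -/
def HAax : Set (Formula Empty) := QAx ∪ prDefAx ∪ indAxioms

/-- The (non-logical) axioms of iPRA (and of PRA). -/
def iPRAax : Set (Formula Empty) := QAx ∪ prDefAx ∪ atomIndAxioms

/-- `PA ⊢_c φ`. -/
def PAproves (φ : Formula Empty) : Prop := cProves HAax φ

/-- `PRA ⊢_c φ`. -/
def PRAproves (φ : Formula Empty) : Prop := cProves iPRAax φ

/-! ### Formula classes -/

def Formula.IsQF : Formula C → Prop
  | .falsum => True
  | .eq _ _ => True
  | .conj φ ψ => φ.IsQF ∧ ψ.IsQF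
  | .disj φ ψ => φ.IsQF ∧ ψ.IsQF
  | .impl φ ψ => φ.IsQF ∧ ψ.IsQF
  | .all _ => False
  | .ex _ => False

def Formula.IsAtomic (φ : Formula C) : Prop :=
  (∃ t u, φ = .eq t u) ∨ φ = .falsum

inductive IsSigma1 : Formula C → Prop
  | of_qf {φ : Formula C} : φ.IsQF → IsSigma1 φ
  | ex {φ : Formula C} : IsSigma1 φ → IsSigma1 (.ex φ)

inductive IsPi1 : Formula C → Prop
  | of_qf {φ : Formula C} : φ.IsQF → IsPi1 φ
  | all {φ : Formula C} : IsPi1 φ → IsPi1 (.all φ)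

inductive IsPi2 : Formula C → Prop
  | of_sigma1 {φ : Formula C} : IsSigma1 φ → IsPi2 φ
  | all {φ : Formula C} : IsPi2 φ → IsPi2 (.all φ)

/-- `Th_Π₁(PA)`. -/
def ThPi1PA : Set (Formula Empty) := {φ | IsPi1 φ ∧ φ.IsClosed ∧ PAproves φ}

/-- `Th_Π₂(PA)`. -/
def ThPi2PA : Set (Formula Empty) := {φ | IsPi2 φ ∧ φ.IsClosed ∧ PAproves φ}

/-- `Th_Π₂(ℕ)`. -/
def ThPi2Std : Set (Formula Empty) := {φ | IsPi2 φ ∧ φ.IsClosed ∧ stdModel.ModelsL φ}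

/-! ### Kleene's T-predicate, ECT₀, Markov's principle, IΔ₁ -/

/-- Kleene's T-predicate on ℕ: `u` codes a (length, value) pair of a halting
computation of machine `e` on input `x`. -/
def KleeneT (e x u : ℕ) : Prop :=
  Nat.Partrec.Code.evaln u.unpair.1 (Denumerable.ofNat Nat.Partrec.Code e) x =
    some u.unpair.2

/-- `tc`/`uc` are L-symbols for (the characteristic function of) Kleene's
T-predicate and the result-extracting function U. -/
def KleeneTU (tc : PRCode 3) (uc : PRCode 1) : Prop :=
  (∀ e x u : ℕ, tc.eval ![e, x, u] = 0 ↔ KleeneT e x u) ∧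
    ∀ u : ℕ, uc.eval ![u] = u.unpair.2

/-- Almost negative formulas: no `∨`, and `∃` only immediately in front of atomic
formulas. -/
def Formula.AlmostNeg : Formula C → Prop
  | .falsum => True
  | .eq _ _ => True
  | .conj φ ψ => φ.AlmostNeg ∧ ψ.AlmostNeg
  | .disj _ _ => False
  | .impl φ ψ => φ.AlmostNeg ∧ ψ.AlmostNeg
  | .all φ => φ.AlmostNeg
  | .ex φ => φ.IsAtomic

/-- An instance of ECT₀:
`∀x(φ(x,v̄) → ∃y ψ(x,y,v̄)) → ∃z ∀x(φ(x,v̄) → ∃u(T(z,x,u) ∧ ψ(x,U(u),v̄)))`.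
Convention: in `φ` the variable `0` is `x` and `1+i` is `vᵢ`; in `ψ` the
variable `0` is `y`, `1` is `x` and `2+i` is `vᵢ`. -/
def ectInstance (tc : PRCode 3) (uc : PRCode 1) (φ ψ : Formula C) : Formula C :=
  Formula.impl
    (.all (φ.impl (.ex ψ)))
    (.ex (.all (Formula.impl
      (φ.subst fun n => match n with
        | 0 => .var 0
        | m + 1 => .var (m + 2))
      (.ex (Formula.conj
        (.eq (.func tc ![Term.var 2, Term.var 1, Term.var 0]) zeroT)
        (ψ.subst fun n => match n with
          | 0 => .func uc ![Term.var 0]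
          | 1 => .var 1
          | m + 2 => .var (m + 3)))))))

/-- The schema ECT₀ (universally closed over the parameters `v̄`). -/
def ECT0 (tc : PRCode 3) (uc : PRCode 1) : Set (Formula Empty) :=
  {χ | ∃ (φ ψ : Formula Empty) (k : ℕ),
      φ.AlmostNeg ∧ χ = closeN k (ectInstance tc uc φ ψ)}

/-- Markov's principle (schema, universally closed over parameters). -/
def MPax : Set (Formula Empty) :=
  {χ | ∃ (φ : Formula Empty) (k : ℕ),
      χ = closeN k (((Formula.all (φ.disj φ.neg)).conj
        (Formula.neg (Formula.neg (.ex φ)))).impl (.ex φ))}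

/-- The classical theory IΔ₁: Q + defining axioms + Δ₁-induction
`∀ȳ[∀x(φ(x,ȳ) ↔ ¬ψ(x,ȳ)) → I_φ]` for Σ₁-formulas `φ, ψ`. -/
def IDelta1 : Set (Formula Empty) :=
  QAx ∪ prDefAx ∪
    {χ | ∃ (φ ψ : Formula Empty) (k : ℕ), IsSigma1 φ ∧ IsSigma1 ψ ∧
        χ = closeN k ((Formula.all (φ.iff ψ.neg)).impl (indBody φ))}

/-! ### Diagrams and the theory `T_M = HA + ECT₀ + Diag(M)` -/

/-- The atomic diagram of an L-structure `M` (as a set of L(M)-sentences). -/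
def diag (M : Struc) : Set (Formula M.carrier) :=
  {φ | ∃ t u : Term M.carrier, t.fvBelow 0 ∧ u.fvBelow 0 ∧
      ((φ = .eq t u ∧ M.ModelsM (.eq t u)) ∨
        (φ = (Formula.eq t u).neg ∧ ¬ M.ModelsM (.eq t u)))}

/-- `T_M := HA + ECT₀ + Diag(M)`, a theory in the language L(M). -/
def TMtheory (tc : PRCode 3) (uc : PRCode 1) (M : Struc) : Set (Formula M.carrier) :=
  (ofL '' (HAax ∪ ECT0 tc uc)) ∪ diag M

/-! ### Kripke models -/

/-- A Kripke model for the language L(C) on the frame `(W, le)`. -/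
structure Kripke (C W : Type) (le : W → W → Prop) where
  ne : Nonempty W
  le_refl : ∀ w, le w w
  le_trans : ∀ {a b c}, le a b → le b c → le a c
  le_antisymm : ∀ {a b}, le a b → le b a → a = b
  dom : W → Type
  emb : ∀ {a b}, le a b → dom a → dom b
  emb_refl : ∀ (w) (x : dom w), emb (le_refl w) x = x
  emb_trans : ∀ {a b c} (h₁ : le a b) (h₂ : le b c) (x : dom a),
      emb (le_trans h₁ h₂) x = emb h₂ (emb h₁ x)
  emb_inj : ∀ {a b} (h : le a b), Function.Injective (emb h)
  interp : ∀ (w) {n : ℕ}, PRCode n → (Fin n → dom w) → dom w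
  interp_emb : ∀ {a b} (h : le a b) {n : ℕ} (f : PRCode n) (v : Fin n → dom a),
      emb h (interp a f v) = interp b f fun i => emb h (v i)
  cInt : ∀ w, C → dom w
  cInt_emb : ∀ {a b} (h : le a b) (c : C), emb h (cInt a c) = cInt b c

variable {W : Type} {le : W → W → Prop}

/-- The classical structure attached to a node. -/
def Kripke.strucAt (K : Kripke C W le) (w : W) : Struc :=
  { carrier := K.dom w, interp := fun f v => K.interp w f v }

/-- Kripke forcing `w ⊩ φ [v]`. -/
def Kripke.force (K : Kripke C W le) : Formula C → (w : W) → (ℕ → K.dom w) → Prop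
  | .falsum, _, _ => False
  | .eq t u, w, v =>
      Term.val (K.strucAt w) (K.cInt w) v t = Term.val (K.strucAt w) (K.cInt w) v u
  | .conj φ ψ, w, v => K.force φ w v ∧ K.force ψ w v
  | .disj φ ψ, w, v => K.force φ w v ∨ K.force ψ w v
  | .impl φ ψ, w, v => ∀ w' (h : le w w'),
      K.force φ w' (fun n => K.emb h (v n)) → K.force ψ w' (fun n => K.emb h (v n))
  | .all φ, w, v => ∀ w' (h : le w w') (a : K.dom w'),
      K.force φ w' (vcons a fun n => K.emb h (v n))
  | .ex φ, w, v => ∃ a, K.force φ w (vcons a v)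

/-- A node forces a formula (under every valuation). -/
def Kripke.ForcesAt (K : Kripke C W le) (w : W) (φ : Formula C) : Prop :=
  ∀ v, K.force φ w v

/-- `K ⊩ φ`: every node forces `φ`. -/
def Kripke.Forces (K : Kripke C W le) (φ : Formula C) : Prop :=
  ∀ w, K.ForcesAt w φ

/-- `r` is a root. -/
def Kripke.Rooted (K : Kripke C W le) (r : W) : Prop := ∀ w, le r w

/-- The classical structure attached to the node `r` is (isomorphic to) `M`,
with constants interpreted by `cI`. -/
def Kripke.rootIs (K : Kripke C W le) (r : W) (M : Struc) (cI : C → M.carrier) : Prop :=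
  ∃ e : K.dom r ≃ M.carrier,
    (∀ {n : ℕ} (f : PRCode n) (v : Fin n → K.dom r),
        e (K.interp r f v) = M.interp f fun i => e (v i)) ∧
    ∀ c, e (K.cInt r c) = cI c

/-- The model is locally `S` (every node's classical structure models the
classical L-theory `S`). -/
def Kripke.locally (K : Kripke C W le) (S : Set (Formula Empty)) : Prop :=
  ∀ w, (K.strucAt w).ModelsLSet S

/-- The characteristic properties of Smoryński-style universal ("collection")
models `K(M, S)`: a root `r` whose structure is `M`, every other node lies in
one of the chosen countermodels (hence forces `S`), and for every sentence `φ`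
unprovable in `S` some non-root node fails to force `φ` (coming from the fixed
countermodel `K_φ ⊩ S`, `K_φ ⊮ φ`). -/
structure IsUniversalModel (M : Struc) (S : Set (Formula M.carrier))
    {W : Type} {le : W → W → Prop} (K : Kripke M.carrier W le) (r : W) : Prop where
  rooted : K.Rooted r
  rootM : K.rootIs r M id
  cover : ∀ w, w ≠ r → ∀ φ ∈ S, K.ForcesAt w φ
  counter : ∀ φ : Formula M.carrier, φ.IsClosed → ¬ iProves S φ →
      ∃ w, w ≠ r ∧ ¬ K.ForcesAt w φ

/-! ### Gödel numbering, r.e. theories, provability predicates -/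

def encList : List ℕ → ℕ := fun l => Encodable.encode l

def PRCode.enc : {n : ℕ} → PRCode n → ℕ
  | _, .zero => Nat.pair 0 0
  | _, .succ => Nat.pair 1 0
  | _, @PRCode.proj n i => Nat.pair 2 (Nat.pair n i.1)
  | _, .comp g h => Nat.pair 3 (Nat.pair g.enc (encList (List.ofFn fun i => (h i).enc)))
  | _, .prec g h => Nat.pair 4 (Nat.pair g.enc h.enc)

def Term.enc : Term Empty → ℕ
  | .var n => Nat.pair 0 n
  | .const c => c.elim
  | .func f ts => Nat.pair 1 (Nat.pair f.enc (encList (List.ofFn fun i => (ts i).enc)))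

/-- Gödel numbering `⌜φ⌝` of L-formulas. -/
def Formula.enc : Formula Empty → ℕ
  | .falsum => Nat.pair 0 0
  | .eq t u => Nat.pair 1 (Nat.pair t.enc u.enc)
  | .conj φ ψ => Nat.pair 2 (Nat.pair φ.enc ψ.enc)
  | .disj φ ψ => Nat.pair 3 (Nat.pair φ.enc ψ.enc)
  | .impl φ ψ => Nat.pair 4 (Nat.pair φ.enc ψ.enc)
  | .all φ => Nat.pair 5 φ.enc
  | .ex φ => Nat.pair 6 φ.enc

/-- The set of axioms is recursively enumerable. -/
def REset (T : Set (Formula Empty)) : Prop :=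
  REPred fun n => ∃ φ ∈ T, φ.enc = n

/-- The class `I` of reasonable intuitionistic arithmetical theories:
consistent, containing iPRA, with an r.e. set of axioms. -/
def InClassI (T : Set (Formula Empty)) : Prop :=
  IConsistent T ∧ iPRAax ⊆ T ∧ REset T

/-- Substitute numerals for the first `n` variables. -/
def substNums (n : ℕ) (a : Fin n → ℕ) (φ : Formula Empty) : Formula Empty :=
  φ.subst fun i => if h : i < n then numeral (a ⟨i, h⟩) else .var (i - n)

/-- Substitute constants of `M` for the first `n` variables. -/
def substConsts (M : Struc) (n : ℕ) (c : Fin n → M.carrier) (φ : Formula Empty) :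
    Formula M.carrier :=
  (ofL φ).subst fun i => if h : i < n then .const (c ⟨i, h⟩) else .var (i - n)

/-- `Pr_T(⌜φ⌝)` at a standard code. -/
def PrAtNum (PrT : Formula Empty) (m : ℕ) : Formula Empty := subst0 (numeral m) PrT

/-- `Con(T) := ¬Pr_T(⌜⊥⌝)`. -/
def ConSent (PrT : Formula Empty) : Formula Empty :=
  (PrAtNum PrT (Formula.falsum : Formula Empty).enc).neg

/-- `(PrT, gsub, fconj, fimp)` is a standard Σ₁ provability predicate for `T`
(obtained from a primitive recursive proof predicate): `gsub φ n` is the L-symbol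
for the primitive recursive function `ā ↦ ⌜φ(ā̇)⌝`, `fconj`/`fimp` arithmetize
conjunction/implication of codes, and the usual derivability conditions are
provable in PRA. -/
structure StdProv (T : Set (Formula Empty)) (PrT : Formula Empty)
    (gsub : Formula Empty → (n : ℕ) → PRCode n) (fconj fimp : PRCode 2) : Prop where
  fv : PrT.fvBelow 1
  sigma1 : IsSigma1 PrT
  sound : ∀ φ : Formula Empty, φ.IsClosed →
      (stdModel.ModelsL (PrAtNum PrT φ.enc) ↔ iProves T φ)
  complete : ∀ φ : Formula Empty, iProves T φ → PRAproves (PrAtNum PrT φ.enc)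
  gsub_spec : ∀ (φ : Formula Empty) (n : ℕ) (a : Fin n → ℕ),
      (gsub φ n).eval a = (substNums n a φ).enc
  fconj_spec : ∀ φ ψ : Formula Empty, fconj.eval ![φ.enc, ψ.enc] = (φ.conj ψ).enc
  fimp_spec : ∀ φ ψ : Formula Empty, fimp.eval ![φ.enc, ψ.enc] = (φ.impl ψ).enc
  pr_conj : PRAproves (closeN 2 (((subst0 (.var 1) PrT).conj (subst0 (.var 0) PrT)).impl
      (subst0 (.func fconj ![Term.var 1, Term.var 0]) PrT)))
  pr_mp : PRAproves (closeN 2 (((subst0 (.var 1) PrT).conj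
      (subst0 (.func fimp ![Term.var 1, Term.var 0]) PrT)).impl (subst0 (.var 0) PrT)))
  pr_inst : ∀ (φ : Formula Empty) (n : ℕ), φ.fvBelow n →
      PRAproves (closeN n ((subst0 (numeral (closeN n φ).enc) PrT).impl
        (subst0 (.func (gsub φ n) (varsF n)) PrT)))
  pr_gsub_conj : ∀ (φ ψ : Formula Empty) (n : ℕ),
      PRAproves (closeN n (.eq (.func (gsub (φ.conj ψ) n) (varsF n))
        (.func fconj ![Term.func (gsub φ n) (varsF n), Term.func (gsub ψ n) (varsF n)])))

/-- `EXT(M,T) = {φ ∈ Sent(L(M)) : M ⊨ Pr_T(⌜φ⌝)}` (where for a sentence with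
parameters the Gödel code is computed inside `M` via the substitution
function). -/
def EXTset (M : Struc) (PrT : Formula Empty)
    (gsub : Formula Empty → (n : ℕ) → PRCode n) : Set (Formula M.carrier) :=
  {χ | ∃ (φ : Formula Empty) (n : ℕ) (c : Fin n → M.carrier), φ.fvBelow n ∧
      χ = substConsts M n c φ ∧
      M.ModelsM (subst0 (.func (gsub φ n) fun i => .const (c i)) (ofL PrT))}

/-- `C_{M,T} := T + EXT(M,T)`. -/
def Ctheory (T : Set (Formula Empty)) (M : Struc) (PrT : Formula Empty)
    (gsub : Formula Empty → (n : ℕ) → PRCode n) : Set (Formula M.carrier) :=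
  (ofL '' T) ∪ EXTset M PrT gsub

/-- Specification of the Π₂ sentence `EP(T)` formalizing the existence property
of `T`: in any model, if `Pr_T(⌜∃x φ(x)⌝)` holds then `Pr_T(⌜φ(ȧ)⌝)` holds for
some element `a`. -/
def EPspec (PrT : Formula Empty) (gsub : Formula Empty → (n : ℕ) → PRCode n)
    (EPf : Formula Empty) : Prop :=
  IsPi2 EPf ∧ EPf.IsClosed ∧
    ∀ M : Struc, M.ModelsL EPf →
      ∀ φ : Formula Empty, φ.fvBelow 1 →
        M.ModelsL (PrAtNum PrT (Formula.ex φ).enc) →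
        ∃ a : M.carrier, Formula.Sat M (fun e => e.elim) (fun _ => a)
          (subst0 (.func (gsub φ 1) ![Term.var 0]) PrT)

/-! ### θ and `HA + ¬θ + MP` -/

/-- `H(x)`: the Turing machine with code `x` halts on input `x`, i.e.
`∃u T(x,x,u)`; here in the variable-convention of the `ψ`-slot of `ectInstance`
(the variable `x` is `1` outside the `∃`). -/
def haltF (tc : PRCode 3) : Formula Empty :=
  Formula.ex (.eq (.func tc ![Term.var 2, Term.var 2, Term.var 0]) zeroT)

/-- `ψ(x,y) := (y = 0 ∧ H(x)) ∨ (y ≠ 0 ∧ ¬H(x))`. -/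
def psi0 (tc : PRCode 3) : Formula Empty :=
  ((Formula.eq (.var 0) zeroT).conj (haltF tc)).disj
    (((Formula.eq (.var 0) zeroT).neg).conj (Formula.neg (haltF tc)))

/-- The sentence `θ`: the instance of ECT₀ with `φ(x) := ⊤` and
`ψ(x,y) := (y = 0 ∧ H(x)) ∨ (y ≠ 0 ∧ ¬H(x))`. -/
def thetaSent (tc : PRCode 3) (uc : PRCode 1) : Formula Empty :=
  ectInstance tc uc (Formula.impl .falsum .falsum) (psi0 tc)

/-- The theory `HA + ¬θ + MP`. -/
def HAMPtheory (tc : PRCode 3) (uc : PRCode 1) : Set (Formula Empty) :=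
  HAax ∪ {(thetaSent tc uc).neg} ∪ MPax

/-!
The proof uses the Aczel slash. For a theory `T`, `T | φ` is defined like Kleene's slash, except
that at `→` and `∀` one also demands `T ⊢ φ`; then `T | φ` implies `T ⊢ φ`, while `T | ∃x ψ` and
`T | φ ∨ ψ` provide a numeral witness and a provable disjunct. By induction on derivations every
theorem of `T` is slashed once every axiom is; the quantifier and equality rules only need that
closed terms are provably equal to numerals, which the defining axioms of the primitive recursive
functions supply. For `T = HA + ¬θ + MP` the axioms are slashed because `ℕ ⊨ T`: in `ℕ` the
conclusion of `θ` would give a total recursive decider of the halting problem, and the premise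
`¬¬∃x φ` of Markov's principle, being provable, is true, so it has a witness `a`, at which the
slashed premise `∀x (φ ∨ ¬φ)` cannot take the side `¬φ(ā)`, as that is provable and hence true.
Soundness in `ℕ` also gives consistency.
-/

section Substitution

@[simp] theorem vcons_zero {α : Type*} (a : α) (v : ℕ → α) : vcons a v 0 = a := rfl

@[simp] theorem vcons_succ {α : Type*} (a : α) (v : ℕ → α) (n : ℕ) : vcons a v (n + 1) = v n := rfl

theorem comp_vcons {α β : Type*} (f : α → β) (a : α) (v : ℕ → α) :
    f ∘ vcons a v = vcons (f a) (f ∘ v) :=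
  funext fun n => by cases n <;> rfl

theorem vcons_eq_vcons_of_le {α : Type*} {σ σ' : ℕ → α} {k : ℕ}
    (hk : ∀ i, k ≤ i → σ i = σ' i) (a : α) (i : ℕ) (hi : k + 1 ≤ i) :
    vcons a σ i = vcons a σ' i := by
  cases i with
  | zero => omega
  | succ j => exact hk j (by omega)

theorem Term.subst_subst (t : Term C) (σ τ : ℕ → Term C) :
    (t.subst σ).subst τ = t.subst fun n => (σ n).subst τ := by
  induction t with
  | var n => rfl
  | const c => rfl
  | func f ts ih => exact congrArg (Term.func f) (funext ih)

theorem Term.subst_var (t : Term C) : t.subst Term.var = t := by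
  induction t with
  | var n => rfl
  | const c => rfl
  | func f ts ih => exact congrArg (Term.func f) (funext ih)

theorem Term.shift_subst_vcons (t s : Term C) (σ : ℕ → Term C) :
    t.shift.subst (vcons s σ) = t.subst σ := by
  rw [Term.shift, Term.subst_subst]; rfl

theorem numeral_subst (m : ℕ) (σ : ℕ → Term C) : (numeral m).subst σ = numeral m := by
  induction m with
  | zero => exact congrArg (Term.func .zero) (funext fun i => i.elim0)
  | succ m ih => exact congrArg (Term.func .succ) (funext fun _ => ih)

theorem zeroT_subst (σ : ℕ → Term C) : (zeroT : Term C).subst σ = zeroT := numeral_subst 0 σ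

theorem succT_subst (t : Term C) (σ : ℕ → Term C) : (succT t).subst σ = succT (t.subst σ) := rfl

theorem liftSubst_subst_liftSubst (σ τ : ℕ → Term C) :
    (fun n => (liftSubst σ n).subst (liftSubst τ)) = liftSubst fun n => (σ n).subst τ := by
  funext n
  cases n with
  | zero => rfl
  | succ n => simp only [liftSubst, Term.shift, Term.subst_subst]; rfl

theorem liftSubst_subst_vcons (τ : ℕ → Term C) (s : Term C) (σ : ℕ → Term C) :
    (fun n => (liftSubst τ n).subst (vcons s σ)) = vcons s fun n => (τ n).subst σ := by
  funext n
  cases n with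
  | zero => rfl
  | succ n => exact Term.shift_subst_vcons (τ n) s σ

theorem Formula.subst_subst (φ : Formula C) (σ τ : ℕ → Term C) :
    (φ.subst σ).subst τ = φ.subst fun n => (σ n).subst τ := by
  induction φ generalizing σ τ with
  | falsum => rfl
  | eq t u => simp only [Formula.subst, Term.subst_subst]
  | conj φ ψ ih₁ ih₂ | disj φ ψ ih₁ ih₂ | impl φ ψ ih₁ ih₂ => simp only [Formula.subst, ih₁, ih₂]
  | all φ ih | ex φ ih => simp only [Formula.subst, ih, liftSubst_subst_liftSubst]

theorem Formula.subst_var (φ : Formula C) : φ.subst Term.var = φ := by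
  have hlift : liftSubst (Term.var : ℕ → Term C) = Term.var := by
    funext n; cases n <;> rfl
  induction φ with
  | falsum => rfl
  | eq t u => simp only [Formula.subst, Term.subst_var]
  | conj φ ψ ih₁ ih₂ | disj φ ψ ih₁ ih₂ | impl φ ψ ih₁ ih₂ => simp only [Formula.subst, ih₁, ih₂]
  | all φ ih | ex φ ih => simp only [Formula.subst, hlift, ih]

theorem Formula.subst_liftSubst_subst_vcons (φ : Formula C) (τ : ℕ → Term C) (s : Term C)
    (σ : ℕ → Term C) :
    (φ.subst (liftSubst τ)).subst (vcons s σ) = φ.subst (vcons s fun n => (τ n).subst σ) := by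
  rw [Formula.subst_subst, liftSubst_subst_vcons]

theorem subst0_eq_subst_vcons (t : Term C) (φ : Formula C) :
    subst0 t φ = φ.subst (vcons t Term.var) := rfl

theorem subst0_subst_liftSubst (s : Term C) (φ : Formula C) (σ : ℕ → Term C) :
    subst0 s (φ.subst (liftSubst σ)) = φ.subst (vcons s σ) := by
  rw [subst0_eq_subst_vcons, Formula.subst_liftSubst_subst_vcons]
  simp only [Term.subst_var]

theorem subst0_subst (t : Term C) (φ : Formula C) (σ : ℕ → Term C) :
    (subst0 t φ).subst σ = subst0 (t.subst σ) (φ.subst (liftSubst σ)) := by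
  rw [subst0_subst_liftSubst, subst0_eq_subst_vcons, Formula.subst_subst]
  congr 1
  funext n
  cases n <;> rfl

theorem Formula.shiftF_subst_liftSubst (φ : Formula C) (σ : ℕ → Term C) :
    φ.shiftF.subst (liftSubst σ) = (φ.subst σ).shiftF := by
  simp only [Formula.shiftF, Formula.subst_subst]; rfl

theorem image_shiftF_subst_liftSubst (Γ : Set (Formula C)) (σ : ℕ → Term C) :
    (Formula.subst (liftSubst σ)) '' (Formula.shiftF '' Γ) =
      Formula.shiftF '' ((Formula.subst σ) '' Γ) := by
  simp only [Set.image_image, Formula.shiftF_subst_liftSubst]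

theorem indBody_subst (φ : Formula C) (σ : ℕ → Term C) :
    (indBody φ).subst σ = indBody (φ.subst (liftSubst σ)) := by
  simp only [indBody, Formula.subst, subst0_subst, zeroT_subst, Formula.subst_subst]
  congr
  funext n
  cases n with
  | zero => rfl
  | succ n => simp only [liftSubst, Term.shift, Term.subst_subst]; rfl

theorem closeN_subst (k : ℕ) (φ : Formula C) (σ : ℕ → Term C) :
    (closeN k φ).subst σ = closeN k (φ.subst (liftSubst^[k] σ)) := by
  induction k generalizing φ with
  | zero => rfl
  | succ k ih => exact (ih φ.all).trans (by rw [Function.iterate_succ_apply']; rfl)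

theorem Term.subst_congr_fvBelow {t : Term C} {k : ℕ} {σ τ : ℕ → Term C} (ht : t.fvBelow k)
    (h : ∀ i < k, σ i = τ i) : t.subst σ = t.subst τ := by
  induction t with
  | var n => exact h n ht
  | const c => rfl
  | func f ts ih => exact congrArg (Term.func f) (funext fun i => ih i (ht i))

theorem Formula.subst_congr_fvBelow {φ : Formula C} {k : ℕ} {σ τ : ℕ → Term C}
    (hφ : φ.fvBelow k) (h : ∀ i < k, σ i = τ i) : φ.subst σ = φ.subst τ := by
  induction φ generalizing k σ τ with
  | falsum => rfl
  | eq t u => simp only [Formula.subst, Term.subst_congr_fvBelow hφ.1 h,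
      Term.subst_congr_fvBelow hφ.2 h]
  | conj φ ψ ih₁ ih₂ | disj φ ψ ih₁ ih₂ | impl φ ψ ih₁ ih₂ =>
      simp only [Formula.subst, ih₁ hφ.1 h, ih₂ hφ.2 h]
  | all φ ih | ex φ ih =>
      refine congrArg _ (ih hφ fun i hi => ?_)
      cases i with
      | zero => rfl
      | succ i => exact congrArg Term.shift (h i (Nat.lt_of_succ_lt_succ hi))

theorem Formula.subst_of_isClosed {φ : Formula C} (hφ : φ.IsClosed) (σ : ℕ → Term C) :
    φ.subst σ = φ :=
  (Formula.subst_congr_fvBelow hφ fun _ hi => absurd hi (Nat.not_lt_zero _)).trans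
    φ.subst_var

theorem Formula.fvBelow_closeN (φ : Formula C) (j k : ℕ) :
    (closeN k φ).fvBelow j ↔ φ.fvBelow (j + k) := by
  induction k generalizing φ with
  | zero => rfl
  | succ k ih => exact (ih φ.all).trans (by rw [← add_assoc]; rfl)

def finEnv {n : ℕ} (ts : Fin n → Term C) : ℕ → Term C :=
  fun i => if h : i < n then ts ⟨i, h⟩ else .var i

@[simp] theorem finEnv_apply {n : ℕ} (ts : Fin n → Term C) (i : Fin n) : finEnv ts i = ts i :=
  dif_pos i.isLt

theorem varsF_subst {n : ℕ} (σ : ℕ → Term C) :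
    (fun i => (varsF n i).subst σ) = fun i : Fin n => σ i := rfl

theorem subst_comp_cons {n : ℕ} (x : Term C) (p : Fin n → Term C) (σ : ℕ → Term C) :
    (fun i => ((Fin.cons x p : Fin (n + 1) → Term C) i).subst σ) =
      Fin.cons (x.subst σ) fun i => (p i).subst σ :=
  funext fun i => Fin.cases rfl (fun _ => rfl) i

theorem numeral_comp_cons {n : ℕ} (a : ℕ) (r : Fin n → ℕ) :
    (fun i => numeral ((Fin.cons a r : Fin (n + 1) → ℕ) i) : Fin (n + 1) → Term C) =
      Fin.cons (numeral a) fun i => numeral (r i) :=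
  funext fun i => Fin.cases rfl (fun _ => rfl) i

end Substitution

namespace Derives

variable {cl : Prop} {Γ Δ : Set (Formula C)} {φ : Formula C}

theorem mono (d : Derives cl Γ φ) (hΓ : Γ ⊆ Δ) : Derives cl Δ φ := by
  induction d generalizing Δ with
  | hyp h => exact hyp (hΓ h)
  | implI _ ih => exact implI (ih (Set.insert_subset_insert hΓ))
  | implE _ _ ih₁ ih₂ => exact implE (ih₁ hΓ) (ih₂ hΓ)
  | conjI _ _ ih₁ ih₂ => exact conjI (ih₁ hΓ) (ih₂ hΓ)
  | conjE1 _ ih => exact conjE1 (ih hΓ)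
  | conjE2 _ ih => exact conjE2 (ih hΓ)
  | disjI1 _ ih => exact disjI1 (ih hΓ)
  | disjI2 _ ih => exact disjI2 (ih hΓ)
  | disjE _ _ _ ih₁ ih₂ ih₃ =>
      exact disjE (ih₁ hΓ) (ih₂ (Set.insert_subset_insert hΓ)) (ih₃ (Set.insert_subset_insert hΓ))
  | falsumE _ ih => exact falsumE (ih hΓ)
  | allI _ ih => exact allI (ih (Set.image_mono hΓ))
  | allE t _ ih => exact allE t (ih hΓ)
  | exI t _ ih => exact exI t (ih hΓ)
  | exE _ _ ih₁ ih₂ => exact exE (ih₁ hΓ) (ih₂ (Set.insert_subset_insert (Set.image_mono hΓ)))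
  | eqRefl t => exact eqRefl t
  | eqSubst t u _ _ ih₁ ih₂ => exact eqSubst t u (ih₁ hΓ) (ih₂ hΓ)
  | dne hcl _ ih => exact dne hcl (ih hΓ)

theorem subst (d : Derives cl Γ φ) (σ : ℕ → Term C) :
    Derives cl ((Formula.subst σ) '' Γ) (φ.subst σ) := by
  induction d generalizing σ with
  | hyp h => exact hyp ⟨_, h, rfl⟩
  | implI _ ih => exact implI (Set.image_insert_eq .. ▸ ih σ)
  | implE _ _ ih₁ ih₂ => exact implE (ih₁ σ) (ih₂ σ)
  | conjI _ _ ih₁ ih₂ => exact conjI (ih₁ σ) (ih₂ σ)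
  | conjE1 _ ih => exact conjE1 (ih σ)
  | conjE2 _ ih => exact conjE2 (ih σ)
  | disjI1 _ ih => exact disjI1 (ih σ)
  | disjI2 _ ih => exact disjI2 (ih σ)
  | disjE _ _ _ ih₁ ih₂ ih₃ =>
      exact disjE (ih₁ σ) (Set.image_insert_eq .. ▸ ih₂ σ) (Set.image_insert_eq .. ▸ ih₃ σ)
  | falsumE _ ih => exact falsumE (ih σ)
  | @allI Γ φ _ ih =>
      have h := ih (liftSubst σ)
      rw [image_shiftF_subst_liftSubst] at h
      exact allI h
  | @allE Γ φ t _ ih => exact subst0_subst t φ σ ▸ allE (t.subst σ) (ih σ)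
  | @exI Γ φ t _ ih => exact exI (t.subst σ) (subst0_subst t φ σ ▸ ih σ)
  | @exE Γ φ χ _ _ ih₁ ih₂ =>
      have h := ih₂ (liftSubst σ)
      rw [Set.image_insert_eq, image_shiftF_subst_liftSubst,
        Formula.shiftF_subst_liftSubst] at h
      exact exE (ih₁ σ) h
  | eqRefl t => exact eqRefl (t.subst σ)
  | @eqSubst Γ φ t u _ _ ih₁ ih₂ =>
      rw [subst0_subst]
      exact eqSubst _ _ (ih₁ σ) (subst0_subst t φ σ ▸ ih₂ σ)
  | dne hcl _ ih => exact dne hcl (ih σ)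

theorem cut (d : Derives cl Δ φ) (hΔ : ∀ δ ∈ Δ, Derives cl Γ δ) : Derives cl Γ φ := by
  induction d generalizing Γ with
  | hyp h => exact hΔ _ h
  | implI _ ih =>
      refine implI (ih ?_)
      rintro δ (rfl | hδ)
      · exact hyp (Set.mem_insert _ _)
      · exact (hΔ δ hδ).mono (Set.subset_insert _ _)
  | implE _ _ ih₁ ih₂ => exact implE (ih₁ hΔ) (ih₂ hΔ)
  | conjI _ _ ih₁ ih₂ => exact conjI (ih₁ hΔ) (ih₂ hΔ)
  | conjE1 _ ih => exact conjE1 (ih hΔ)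
  | conjE2 _ ih => exact conjE2 (ih hΔ)
  | disjI1 _ ih => exact disjI1 (ih hΔ)
  | disjI2 _ ih => exact disjI2 (ih hΔ)
  | disjE _ _ _ ih₁ ih₂ ih₃ =>
      refine disjE (ih₁ hΔ) (ih₂ ?_) (ih₃ ?_) <;>
      · rintro δ (rfl | hδ)
        · exact hyp (Set.mem_insert _ _)
        · exact (hΔ δ hδ).mono (Set.subset_insert _ _)
  | falsumE _ ih => exact falsumE (ih hΔ)
  | allI _ ih =>
      refine allI (ih ?_)
      rintro _ ⟨δ, hδ, rfl⟩
      exact (hΔ δ hδ).subst _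
  | allE t _ ih => exact allE t (ih hΔ)
  | exI t _ ih => exact exI t (ih hΔ)
  | exE _ _ ih₁ ih₂ =>
      refine exE (ih₁ hΔ) (ih₂ ?_)
      rintro _ (rfl | ⟨δ, hδ, rfl⟩)
      · exact hyp (Set.mem_insert _ _)
      · exact ((hΔ δ hδ).subst _).mono (Set.subset_insert _ _)
  | eqRefl t => exact eqRefl t
  | eqSubst t u _ _ ih₁ ih₂ => exact eqSubst t u (ih₁ hΔ) (ih₂ hΔ)
  | dne hcl _ ih => exact dne hcl (ih hΔ)

theorem eq_symm {t u : Term C} (h : Derives cl Γ (.eq t u)) : Derives cl Γ (.eq u t) := by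
  have hsubst : ∀ s, subst0 s (.eq (.var 0) t.shift) = .eq s t := fun s => by
    simp only [subst0_eq_subst_vcons, Formula.subst, Term.shift_subst_vcons, Term.subst_var]; rfl
  exact hsubst u ▸ eqSubst t u h (hsubst t ▸ eqRefl t)

theorem eq_trans {a b c : Term C} (hab : Derives cl Γ (.eq a b)) (hbc : Derives cl Γ (.eq b c)) :
    Derives cl Γ (.eq a c) := by
  have hsubst : ∀ s, subst0 s (.eq a.shift (.var 0)) = .eq a s := fun s => by
    simp only [subst0_eq_subst_vcons, Formula.subst, Term.shift_subst_vcons, Term.subst_var]; rfl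
  exact hsubst c ▸ eqSubst b c hbc (hsubst b ▸ hab)

theorem subst_of_eq_at {σ σ' : ℕ → Term C} {k : ℕ} (hk : ∀ i ≠ k, σ i = σ' i)
    (heq : Derives cl Γ (.eq (σ k) (σ' k))) (h : Derives cl Γ (φ.subst σ)) :
    Derives cl Γ (φ.subst σ') := by
  -- `φ[σ]` and `φ[σ']` are `ψ[σ k/0]` and `ψ[σ' k/0]` for one `ψ` with `0` at position `k`
  let τ : ℕ → Term C := fun i => if i = k then .var 0 else (σ i).shift
  have key : ∀ ρ : ℕ → Term C, (∀ i ≠ k, σ i = ρ i) → φ.subst ρ = subst0 (ρ k) (φ.subst τ) := by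
    intro ρ hρ
    rw [subst0_eq_subst_vcons, Formula.subst_subst]
    congr 1
    funext i
    by_cases hi : i = k
    · subst hi; simp only [τ, if_pos]; rfl
    · simp only [τ, if_neg hi, Term.shift_subst_vcons, Term.subst_var, hρ i hi]
  rw [key σ' hk]
  exact eqSubst _ _ heq (key σ (fun _ _ => rfl) ▸ h)

theorem subst_of_eq {σ σ' : ℕ → Term C} (k : ℕ) (heq : ∀ i, Derives cl Γ (.eq (σ i) (σ' i)))
    (hk : ∀ i, k ≤ i → σ i = σ' i) (h : Derives cl Γ (φ.subst σ)) :
    Derives cl Γ (φ.subst σ') := by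
  induction k generalizing σ' with
  | zero => rwa [← funext fun i => hk i (Nat.zero_le i)]
  | succ k ih =>
      let ρ : ℕ → Term C := fun i => if i = k then σ i else σ' i
      have hρ : Derives cl Γ (φ.subst ρ) := by
        refine ih (fun i => ?_) (fun i hi => ?_)
        · by_cases hi : i = k
          · simp only [ρ, if_pos hi]; exact eqRefl _
          · simp only [ρ, if_neg hi]; exact heq i
        · by_cases hik : i = k
          · simp only [ρ, if_pos hik]
          · simp only [ρ, if_neg hik]; exact hk i (by omega)
      exact subst_of_eq_at (fun i hi => if_neg hi) (by simpa only [ρ, if_pos] using heq k) hρ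

end Derives

section Semantics

variable {S : Struc} {cI : C → S.carrier}

@[simp] theorem Term.val_var (v : ℕ → S.carrier) (n : ℕ) :
    (Term.var n : Term C).val S cI v = v n := rfl

theorem Term.val_subst (t : Term C) (σ : ℕ → Term C) (v : ℕ → S.carrier) :
    (t.subst σ).val S cI v = t.val S cI fun n => (σ n).val S cI v := by
  induction t with
  | var n => rfl
  | const c => rfl
  | func f ts ih => exact congrArg (S.interp f) (funext ih)

theorem liftSubst_val (σ : ℕ → Term C) (a : S.carrier) (v : ℕ → S.carrier) :
    (fun n => (liftSubst σ n).val S cI (vcons a v)) = vcons a fun n => (σ n).val S cI v := by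
  funext n
  cases n with
  | zero => rfl
  | succ n => exact Term.val_subst _ _ _

theorem Formula.sat_subst (φ : Formula C) (σ : ℕ → Term C) (v : ℕ → S.carrier) :
    (φ.subst σ).Sat S cI v ↔ φ.Sat S cI fun n => (σ n).val S cI v := by
  induction φ generalizing σ v with
  | falsum => exact Iff.rfl
  | eq t u => simp only [Formula.subst, Formula.Sat, Term.val_subst]
  | conj φ ψ ih₁ ih₂ | disj φ ψ ih₁ ih₂ | impl φ ψ ih₁ ih₂ =>
      simp only [Formula.subst, Formula.Sat, ih₁, ih₂]
  | all φ ih => exact forall_congr' fun a => (ih _ _).trans (by rw [liftSubst_val])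
  | ex φ ih => exact exists_congr fun a => (ih _ _).trans (by rw [liftSubst_val])

theorem Formula.sat_subst0 (t : Term C) (φ : Formula C) (v : ℕ → S.carrier) :
    (subst0 t φ).Sat S cI v ↔ φ.Sat S cI (vcons (t.val S cI v) v) := by
  have hval : (fun n => (vcons t Term.var n).val S cI v) = vcons (t.val S cI v) v := by
    funext n; cases n <;> rfl
  rw [subst0_eq_subst_vcons, Formula.sat_subst, hval]

theorem Formula.sat_shiftF (φ : Formula C) (a : S.carrier) (v : ℕ → S.carrier) :
    φ.shiftF.Sat S cI (vcons a v) ↔ φ.Sat S cI v :=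
  φ.sat_subst _ _

theorem Derives.sound {cl : Prop} {Γ : Set (Formula C)} {φ : Formula C}
    (d : Derives cl Γ φ) (v : ℕ → S.carrier) (hΓ : ∀ γ ∈ Γ, γ.Sat S cI v) : φ.Sat S cI v := by
  induction d generalizing v with
  | hyp h => exact hΓ _ h
  | implI _ ih => exact fun hφ => ih v (Set.forall_mem_insert.2 ⟨hφ, hΓ⟩)
  | implE _ _ ih₁ ih₂ => exact ih₁ v hΓ (ih₂ v hΓ)
  | conjI _ _ ih₁ ih₂ => exact ⟨ih₁ v hΓ, ih₂ v hΓ⟩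
  | conjE1 _ ih => exact (ih v hΓ).1
  | conjE2 _ ih => exact (ih v hΓ).2
  | disjI1 _ ih => exact Or.inl (ih v hΓ)
  | disjI2 _ ih => exact Or.inr (ih v hΓ)
  | disjE _ _ _ ih₁ ih₂ ih₃ =>
      exact (ih₁ v hΓ).elim (fun h => ih₂ v (Set.forall_mem_insert.2 ⟨h, hΓ⟩))
        (fun h => ih₃ v (Set.forall_mem_insert.2 ⟨h, hΓ⟩))
  | falsumE _ ih => exact (ih v hΓ).elim
  | allI _ ih =>
      exact fun a => ih _ (Set.forall_mem_image.2 fun γ hγ => (γ.sat_shiftF a v).2 (hΓ γ hγ))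
  | allE t _ ih => exact (Formula.sat_subst0 _ _ _).2 (ih v hΓ _)
  | exI t _ ih => exact ⟨_, (Formula.sat_subst0 _ _ _).1 (ih v hΓ)⟩
  | exE _ _ ih₁ ih₂ =>
      obtain ⟨a, ha⟩ := ih₁ v hΓ
      refine (Formula.sat_shiftF _ a v).1 (ih₂ _ (Set.forall_mem_insert.2 ⟨ha, ?_⟩))
      exact Set.forall_mem_image.2 fun γ hγ => (γ.sat_shiftF a v).2 (hΓ γ hγ)
  | eqRefl t => rfl
  | eqSubst t u _ _ ih₁ ih₂ =>
      rw [Formula.sat_subst0, ← ih₁ v hΓ]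
      exact (Formula.sat_subst0 _ _ _).1 (ih₂ v hΓ)
  | dne _ _ ih => exact Classical.byContradiction fun h => ih v hΓ h

theorem sat_closeN {φ : Formula C} (h : ∀ v, φ.Sat S cI v)
    (k : ℕ) (v : ℕ → S.carrier) : (closeN k φ).Sat S cI v := by
  induction k generalizing φ with
  | zero => exact h v
  | succ k ih => exact ih fun v a => h (vcons a v)

theorem Term.val_func_vec₁ (v : ℕ → S.carrier) (f : PRCode 1)
    (a : Term C) : (Term.func f ![a]).val S cI v = S.interp f ![a.val S cI v] :=
  congrArg _ (funext fun i => by fin_cases i; rfl)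

theorem Term.val_func_vec₃ (v : ℕ → S.carrier) (f : PRCode 3)
    (a b c : Term C) :
    (Term.func f ![a, b, c]).val S cI v =
      S.interp f ![a.val S cI v, b.val S cI v, c.val S cI v] :=
  congrArg _ (funext fun i => by fin_cases i <;> rfl)

theorem Struc.modelsL_of_iProves {T : Set (Formula Empty)} (hS : S.ModelsLSet T)
    {φ : Formula Empty} (h : iProves T φ) : S.ModelsL φ :=
  fun v => Derives.sound h v fun γ hγ => hS γ hγ v

theorem iConsistent_of_modelsLSet {T : Set (Formula Empty)} (hS : S.ModelsLSet T)
    [Nonempty S.carrier] : IConsistent T :=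
  fun h => Struc.modelsL_of_iProves hS h fun _ => Classical.arbitrary _

end Semantics

section StandardModel

instance : Nonempty stdModel.carrier := inferInstanceAs (Nonempty ℕ)

-- Stated over `stdModel.carrier` rather than `ℕ`, as `rw` and `simp` need the carrier verbatim.
@[simp] theorem zeroT_val (cI : C → stdModel.carrier) (v : ℕ → stdModel.carrier) :
    (zeroT : Term C).val stdModel cI v = (0 : ℕ) := rfl

theorem numeral_val (m : ℕ) (cI : C → stdModel.carrier) (v : ℕ → stdModel.carrier) :
    (numeral m : Term C).val stdModel cI v = (m : ℕ) := by
  induction m with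
  | zero => rfl
  | succ m ih => exact congrArg Nat.succ ih

theorem sat_subst_numeral {φ : Formula Empty} (v w : ℕ → ℕ) :
    (φ.subst (numeral ∘ v)).Sat stdModel (fun e => e.elim) w ↔
      φ.Sat stdModel (fun e => e.elim) v := by
  have hval : (fun n => ((numeral ∘ v) n).val stdModel (fun e : Empty => e.elim) w) = v :=
    funext fun n => numeral_val (v n) _ w
  exact (Formula.sat_subst (S := stdModel) φ (numeral ∘ v) w).trans (by rw [hval])

theorem numeral_eq_of_iProves {T : Set (Formula Empty)} (hN : stdModel.ModelsLSet T) {a b : ℕ}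
    (h : iProves T (.eq (numeral a) (numeral b))) : a = b := by
  have hab : (numeral a : Term Empty).val stdModel _ _ =
      (numeral b : Term Empty).val stdModel _ _ :=
    Struc.modelsL_of_iProves hN h fun _ => (0 : ℕ)
  exact (numeral_val a _ _).symm.trans (hab.trans (numeral_val b _ _))

theorem stdModel_modelsL_of_mem_QAx {γ : Formula Empty} (h : γ ∈ QAx) : stdModel.ModelsL γ := by
  rcases h with rfl | rfl | rfl
  · exact fun _ _ h => Nat.succ_ne_zero _ h
  · exact fun _ _ _ h => Nat.succ_injective h
  · intro _ a
    cases a with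
    | zero => exact Or.inl rfl
    | succ n => exact Or.inr ⟨n, rfl⟩

theorem stdModel_modelsL_of_mem_prDefAx {γ : Formula Empty} (h : γ ∈ prDefAx) :
    stdModel.ModelsL γ := by
  obtain ⟨n, c, hc⟩ := h
  cases c with
  | zero | succ => simp [PRCode.defAx] at hc
  | proj | comp =>
      rw [PRCode.defAx, List.mem_singleton] at hc
      subst hc
      refine sat_closeN (fun _ => ?_) _
      rfl
  | prec g h =>
      simp only [PRCode.defAx, List.mem_cons, List.not_mem_nil, or_false] at hc
      rcases hc with rfl | rfl <;> refine sat_closeN (fun _ => ?_) _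
      · rfl
      · exact congrArg h.eval (funext fun i => Fin.cases rfl (Fin.cases rfl fun _ => rfl) i)

theorem stdModel_modelsL_of_mem_indAxioms {γ : Formula Empty} (h : γ ∈ indAxioms) :
    stdModel.ModelsL γ := by
  obtain ⟨φ, k, rfl⟩ := h
  refine sat_closeN (fun v ⟨hzero, hsucc⟩ a => ?_) k
  induction a with
  | zero => exact (φ.sat_subst0 _ v).1 hzero
  | succ a ih =>
      convert (φ.sat_subst _ _).1 (hsucc a ih) using 1
      funext n
      cases n <;> rfl

theorem stdModel_modelsL_of_mem_MPax {γ : Formula Empty} (h : γ ∈ MPax) :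
    stdModel.ModelsL γ := by
  obtain ⟨φ, k, rfl⟩ := h
  exact sat_closeN (fun _ ⟨_, hnn⟩ => Classical.not_not.1 hnn) k

end StandardModel

section Halting

open Nat.Partrec

theorem not_computablePred_diagonal_halting :
    ¬ ComputablePred fun c : Code => (c.eval (Encodable.encode c)).Dom := by
  intro h
  refine ComputablePred.halting_problem 0 (ComputablePred.computable_of_manyOneReducible ?_ h)
  refine ⟨fun c => c.comp (Code.const 0),
    (Code.primrec₂_comp.comp Primrec.id (Code.primrec_const.comp (Primrec.const 0))).to_comp,
    fun c => ?_⟩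
  simp only [Code.eval, Code.eval_const]
  exact (congrArg Part.Dom (Part.bind_some 0 (Code.eval c))).to_iff.symm

theorem not_forall_code_decides_halting (z : ℕ) :
    ¬ ∀ x, ∃ a ∈ (Denumerable.ofNat Code z).eval x,
      (a = 0 ↔ ((Denumerable.ofNat Code x).eval x).Dom) := by
  intro hz
  choose f hf using fun c : Code => Denumerable.ofNat_encode c ▸ hz (Encodable.encode c)
  have hf_comp : Computable f :=
    ((Code.eval_part.comp (Computable.const _) Computable.encode).of_eq
      fun c => Part.eq_some_iff.2 (hf c).1 : Partrec fun c => Part.some (f c))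
  refine not_computablePred_diagonal_halting (ComputablePred.computable_iff.2
    ⟨fun c => decide (f c = 0), ?_, funext fun c => propext ?_⟩)
  · exact (Primrec.eq.comp Primrec.id (Primrec.const 0)).decide.to_comp.comp hf_comp
  · simpa using (hf c).2.symm

variable {tc : PRCode 3} {uc : PRCode 1}

theorem KleeneTU.mem_eval (hTU : KleeneTU tc uc) {e x u : ℕ} (h : tc.eval ![e, x, u] = 0) :
    uc.eval ![u] ∈ (Denumerable.ofNat Code e).eval x := by
  rw [hTU.2]
  exact Code.evaln_sound ((hTU.1 e x u).1 h)

theorem KleeneTU.exists_iff_dom (hTU : KleeneTU tc uc) (e x : ℕ) :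
    (∃ u, tc.eval ![e, x, u] = 0) ↔ ((Denumerable.ofNat Code e).eval x).Dom := by
  refine ⟨fun ⟨u, hu⟩ => Part.dom_iff_mem.2 ⟨_, hTU.mem_eval hu⟩, fun h => ?_⟩
  obtain ⟨a, ha⟩ := Part.dom_iff_mem.1 h
  obtain ⟨k, hk⟩ := Code.evaln_complete.1 ha
  exact ⟨Nat.pair k a, (hTU.1 _ _ _).2 (by simpa [KleeneT] using hk)⟩

theorem stdModel_sat_neg_thetaSent (hTU : KleeneTU tc uc) (v : ℕ → ℕ) :
    (thetaSent tc uc).neg.Sat stdModel (fun e => e.elim) v := by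
  intro hθ
  simp only [thetaSent, ectInstance, psi0, haltF, Formula.Sat, Formula.sat_subst, Formula.neg,
    Term.val_func_vec₃, Term.val_func_vec₁, Term.val_var, zeroT_val, vcons] at hθ
  obtain ⟨z, hz⟩ := hθ fun x _ => (em (∃ u, tc.eval ![x, x, u] = 0)).elim
    (fun h => ⟨(0 : ℕ), Or.inl ⟨rfl, h⟩⟩) (fun h => ⟨(1 : ℕ), Or.inr ⟨Nat.one_ne_zero, h⟩⟩)
  refine not_forall_code_decides_halting z fun x => ?_
  obtain ⟨u, hu, hdec⟩ := hz x id
  refine ⟨uc.eval ![u], hTU.mem_eval hu, ?_⟩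
  rw [← hTU.exists_iff_dom]
  tauto

end Halting

theorem stdModel_modelsLSet_HAMPtheory {tc : PRCode 3} {uc : PRCode 1} (hTU : KleeneTU tc uc) :
    stdModel.ModelsLSet (HAMPtheory tc uc) := by
  rintro γ ((((hQ | hPR) | hind) | rfl) | hMP)
  · exact stdModel_modelsL_of_mem_QAx hQ
  · exact stdModel_modelsL_of_mem_prDefAx hPR
  · exact stdModel_modelsL_of_mem_indAxioms hind
  · exact stdModel_sat_neg_thetaSent hTU
  · exact stdModel_modelsL_of_mem_MPax hMP

def SubstClosed (T : Set (Formula C)) : Prop := ∀ γ ∈ T, ∀ σ, γ.subst σ ∈ T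

section ProvableEvaluation

variable {T : Set (Formula Empty)}

theorem iProves_subst (hT : SubstClosed T) {φ : Formula Empty} (h : iProves T φ)
    (σ : ℕ → Term Empty) : iProves T (φ.subst σ) :=
  (Derives.subst h σ).mono (by rintro _ ⟨γ, hγ, rfl⟩; exact hT γ hγ σ)

theorem iProves_subst_of_closeN (hT : SubstClosed T) {k : ℕ} {φ : Formula Empty}
    (h : iProves T (closeN k φ)) (σ : ℕ → Term Empty) : iProves T (φ.subst σ) := by
  induction k generalizing φ σ with
  | zero => exact iProves_subst hT h σ
  | succ k ih =>
      have hσ : vcons (σ 0) (fun n => σ (n + 1)) = σ := funext fun n => by cases n <;> rfl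
      have h' := Derives.allE (σ 0) (ih h fun n => σ (n + 1))
      rwa [subst0_subst_liftSubst, hσ] at h'

theorem iProves_subst_of_derives {Γ : Set (Formula Empty)} {φ : Formula Empty}
    (d : Derives False Γ φ) {σ : ℕ → Term Empty} (hΓ : ∀ γ ∈ Γ, iProves T (γ.subst σ)) :
    iProves T (φ.subst σ) :=
  Derives.cut (d.subst σ) (by rintro _ ⟨γ, hγ, rfl⟩; exact hΓ γ hγ)

theorem iProves_subst_iff_of_eq {φ : Formula Empty}
    {σ σ' : ℕ → Term Empty} (k : ℕ) (heq : ∀ i, iProves T (.eq (σ i) (σ' i)))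
    (hk : ∀ i, k ≤ i → σ i = σ' i) : iProves T (φ.subst σ) ↔ iProves T (φ.subst σ') :=
  ⟨Derives.subst_of_eq k heq hk,
    Derives.subst_of_eq k (fun i => Derives.eq_symm (heq i)) fun i hi => (hk i hi).symm⟩

theorem iProves_func_eq_numeral {n : ℕ} {f : PRCode n} {ts : Fin n → Term Empty}
    {m : Fin n → ℕ} {N : ℕ} (hts : ∀ i, iProves T (.eq (ts i) (numeral (m i))))
    (hf : iProves T (.eq (.func f fun i => numeral (m i)) (numeral N))) :
    iProves T (.eq (.func f ts) (numeral N)) := by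
  have key : ∀ us : Fin n → Term Empty,
      (Formula.eq (.func f (varsF n)) (numeral N)).subst (finEnv us) =
        .eq (.func f us) (numeral N) :=
    fun us => by simp only [Formula.subst, Term.subst, numeral_subst, varsF_subst, finEnv_apply]
  rw [← key]
  refine Derives.subst_of_eq n (fun i => ?_) (fun i hi => ?_) ((key _).symm ▸ hf)
  · by_cases hi : i < n
    · simpa [finEnv, hi] using Derives.eq_symm (hts ⟨i, hi⟩)
    · simpa [finEnv, hi] using Derives.eqRefl _
  · simp [finEnv, not_lt.2 hi]

theorem iProves_func_numerals_eq_eval (hT : SubstClosed T) (hPR : prDefAx ⊆ T) {n : ℕ} (c : PRCode n)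
    (m : Fin n → ℕ) : iProves T (.eq (.func c fun i => numeral (m i)) (numeral (c.eval m))) := by
  have hax : ∀ {n k : ℕ} {c : PRCode n} {φ : Formula Empty}, closeN k φ ∈ c.defAx →
      ∀ σ, iProves T (φ.subst σ) := fun hφ σ => iProves_subst_of_closeN hT (.hyp (hPR ⟨_, _, hφ⟩)) σ
  induction c with
  | zero =>
      rw [show (fun i => numeral (m i) : Fin 0 → Term Empty) = ![] from funext fun i => i.elim0]
      exact Derives.eqRefl _
  | succ =>
      rw [show (fun i => numeral (m i) : Fin 1 → Term Empty) = fun _ => numeral (m 0) from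
        funext fun i => by rw [Fin.fin_one_eq_zero i]]
      exact Derives.eqRefl _
  | proj i =>
      have hdef := hax (c := .proj i) (List.mem_singleton_self _) (finEnv fun i => numeral (m i))
      simp only [Formula.subst, Term.subst, varsF_subst, finEnv_apply] at hdef
      exact hdef
  | comp g hs ihg ihh =>
      have hdef := hax (c := .comp g hs) (List.mem_singleton_self _) (finEnv fun i => numeral (m i))
      simp only [Formula.subst, Term.subst, varsF_subst, finEnv_apply] at hdef
      exact Derives.eq_trans hdef (iProves_func_eq_numeral (fun i => ihh i m) (ihg _))
  | prec g h ihg ihh =>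
      suffices hrec : ∀ a r, iProves T
          (.eq (.func (.prec g h) (Fin.cons (numeral a) fun i => numeral (r i)))
            (numeral ((PRCode.prec g h).eval (Fin.cons a r)))) by
        have hm := hrec (m 0) (Fin.tail m)
        rwa [← numeral_comp_cons, Fin.cons_self_tail] at hm
      intro a
      induction a with
      | zero =>
          intro r
          have hdef := hax (c := .prec g h) List.mem_cons_self (finEnv fun i => numeral (r i))
          simp only [Formula.subst, Term.subst, subst_comp_cons, varsF_subst, finEnv_apply,
            zeroT_subst] at hdef
          exact Derives.eq_trans hdef (ihg r)
      | succ a iha =>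
          intro r
          have hdef := hax (c := .prec g h) (List.mem_cons_of_mem _ (List.mem_singleton_self _))
            (vcons (numeral a) (finEnv fun i => numeral (r i)))
          simp only [Formula.subst, Term.subst, subst_comp_cons, finEnv_apply, succT_subst,
            vcons_zero, vcons_succ] at hdef
          exact Derives.eq_trans hdef (iProves_func_eq_numeral
            (Fin.cases (Derives.eqRefl _) (Fin.cases (iha r) fun _ => Derives.eqRefl _)) (ihh _))

theorem iProves_subst_eq_numeral_val (hT : SubstClosed T)
    (hPR : prDefAx ⊆ T) (t : Term Empty) (v : ℕ → ℕ) :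
    iProves T (.eq (t.subst (numeral ∘ v)) (numeral (t.val stdModel (fun e => e.elim) v))) := by
  induction t with
  | var n => exact Derives.eqRefl _
  | const c => exact c.elim
  | func f ts ih => exact iProves_func_eq_numeral ih (iProves_func_numerals_eq_eval hT hPR f _)

theorem iProves_eq_vcons {σ σ' : ℕ → Term Empty} (heq : ∀ i, iProves T (.eq (σ i) (σ' i)))
    (s : Term Empty) (i : ℕ) : iProves T (.eq (vcons s σ i) (vcons s σ' i)) := by
  cases i with
  | zero => exact Derives.eqRefl _
  | succ i => exact heq i

end ProvableEvaluation

/-- The Aczel slash `T | φ[σ]`, with the free variables of `φ` instantiated by `σ` and the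
quantifiers ranging over numerals. -/
def Slash (T : Set (Formula Empty)) : Formula Empty → (ℕ → Term Empty) → Prop
  | .falsum, _ => False
  | .eq t u, σ => iProves T ((Formula.eq t u).subst σ)
  | .conj φ ψ, σ => Slash T φ σ ∧ Slash T ψ σ
  | .disj φ ψ, σ => Slash T φ σ ∨ Slash T ψ σ
  | .impl φ ψ, σ => iProves T ((φ.impl ψ).subst σ) ∧ (Slash T φ σ → Slash T ψ σ)
  | .all φ, σ => iProves T ((Formula.all φ).subst σ) ∧ ∀ n, Slash T φ (vcons (numeral n) σ)
  | .ex φ, σ => ∃ n, Slash T φ (vcons (numeral n) σ)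

theorem exists_closeN_eq_of_mem_prDefAx {γ : Formula Empty} (hγ : γ ∈ prDefAx) :
    ∃ k t u, γ = closeN k (.eq t u) := by
  obtain ⟨n, c, hc⟩ := hγ
  cases c <;> simp only [PRCode.defAx, List.mem_cons, List.not_mem_nil, or_false] at hc
  all_goals rcases hc with rfl | rfl <;> exact ⟨_, _, _, rfl⟩

namespace Slash

variable {T : Set (Formula Empty)}

theorem provable {φ : Formula Empty} {σ : ℕ → Term Empty} (h : Slash T φ σ) :
    iProves T (φ.subst σ) := by
  induction φ generalizing σ with
  | falsum => exact h.elim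
  | eq t u => exact h
  | conj φ ψ ih₁ ih₂ => exact Derives.conjI (ih₁ h.1) (ih₂ h.2)
  | disj φ ψ ih₁ ih₂ =>
      exact h.elim (fun h => Derives.disjI1 (ih₁ h)) fun h => Derives.disjI2 (ih₂ h)
  | impl φ ψ _ _ | all φ _ => exact h.1
  | ex φ ih =>
      obtain ⟨n, hn⟩ := h
      exact Derives.exI (numeral n) ((subst0_subst_liftSubst _ φ σ).symm ▸ ih hn)

theorem subst_iff {φ : Formula Empty} {τ σ : ℕ → Term Empty} :
    Slash T (φ.subst τ) σ ↔ Slash T φ fun n => (τ n).subst σ := by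
  induction φ generalizing τ σ with
  | falsum => exact Iff.rfl
  | eq t u => exact iff_of_eq (congrArg _ ((Formula.eq t u).subst_subst τ σ))
  | conj φ ψ ih₁ ih₂ => exact and_congr ih₁ ih₂
  | disj φ ψ ih₁ ih₂ => exact or_congr ih₁ ih₂
  | impl φ ψ ih₁ ih₂ =>
      exact and_congr (iff_of_eq (congrArg _ ((φ.impl ψ).subst_subst τ σ))) (imp_congr ih₁ ih₂)
  | all φ ih =>
      refine and_congr (iff_of_eq (congrArg _ (φ.all.subst_subst τ σ))) (forall_congr' fun n => ?_)
      rw [ih, liftSubst_subst_vcons]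
  | ex φ ih => exact exists_congr fun n => by rw [ih, liftSubst_subst_vcons]

theorem shiftF_iff {φ : Formula Empty} {s : Term Empty} {σ : ℕ → Term Empty} :
    Slash T φ.shiftF (vcons s σ) ↔ Slash T φ σ :=
  subst_iff

theorem subst0_iff {φ : Formula Empty} {t : Term Empty} {σ : ℕ → Term Empty} :
    Slash T (subst0 t φ) σ ↔ Slash T φ (vcons (t.subst σ) σ) := by
  rw [subst0_eq_subst_vcons, subst_iff]
  exact iff_of_eq (congrArg _ (funext fun n => by cases n <;> rfl))

theorem congr_of_eq {φ : Formula Empty} {σ σ' : ℕ → Term Empty} (k : ℕ)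
    (heq : ∀ i, iProves T (.eq (σ i) (σ' i))) (hk : ∀ i, k ≤ i → σ i = σ' i) :
    Slash T φ σ ↔ Slash T φ σ' := by
  induction φ generalizing σ σ' k with
  | falsum => exact Iff.rfl
  | eq t u => exact iProves_subst_iff_of_eq k heq hk
  | conj φ ψ ih₁ ih₂ => exact and_congr (ih₁ k heq hk) (ih₂ k heq hk)
  | disj φ ψ ih₁ ih₂ => exact or_congr (ih₁ k heq hk) (ih₂ k heq hk)
  | impl φ ψ ih₁ ih₂ =>
      exact and_congr (iProves_subst_iff_of_eq k heq hk) (imp_congr (ih₁ k heq hk) (ih₂ k heq hk))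
  | all φ ih =>
      exact and_congr (iProves_subst_iff_of_eq k heq hk) (forall_congr' fun n =>
        ih (k + 1) (iProves_eq_vcons heq _) (vcons_eq_vcons_of_le hk _))
  | ex φ ih =>
      exact exists_congr fun n => ih (k + 1) (iProves_eq_vcons heq _) (vcons_eq_vcons_of_le hk _)

theorem vcons_congr {φ : Formula Empty} {s s' : Term Empty} {σ : ℕ → Term Empty}
    (h : iProves T (.eq s s')) : Slash T φ (vcons s σ) ↔ Slash T φ (vcons s' σ) :=
  congr_of_eq 1
    (fun i => by cases i with
      | zero => exact h
      | succ i => exact Derives.eqRefl _)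
    (fun i hi => by cases i with
      | zero => omega
      | succ i => rfl)

theorem subst0_numeral_iff (hT : SubstClosed T) (hPR : prDefAx ⊆ T) {φ : Formula Empty}
    {t : Term Empty} {v : ℕ → ℕ} :
    Slash T (subst0 t φ) (numeral ∘ v) ↔
      Slash T φ (vcons (numeral (t.val stdModel (fun e => e.elim) v)) (numeral ∘ v)) := by
  rw [subst0_iff]
  exact vcons_congr (iProves_subst_eq_numeral_val hT hPR t v)

theorem of_derives (hT : SubstClosed T) (hPR : prDefAx ⊆ T) {Γ : Set (Formula Empty)}
    {φ : Formula Empty} (d : Derives False Γ φ) (v : ℕ → ℕ)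
    (hΓ : ∀ γ ∈ Γ, Slash T γ (numeral ∘ v)) : Slash T φ (numeral ∘ v) := by
  induction d generalizing v with
  | hyp h => exact hΓ _ h
  | implI d ih =>
      refine ⟨iProves_subst_of_derives (Derives.implI d) fun γ hγ => (hΓ γ hγ).provable,
        fun hφ => ih v ?_⟩
      exact Set.forall_mem_insert.2 ⟨hφ, hΓ⟩
  | implE _ _ ih₁ ih₂ => exact (ih₁ v hΓ).2 (ih₂ v hΓ)
  | conjI _ _ ih₁ ih₂ => exact ⟨ih₁ v hΓ, ih₂ v hΓ⟩
  | conjE1 _ ih => exact (ih v hΓ).1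
  | conjE2 _ ih => exact (ih v hΓ).2
  | disjI1 _ ih => exact Or.inl (ih v hΓ)
  | disjI2 _ ih => exact Or.inr (ih v hΓ)
  | disjE _ _ _ ih₁ ih₂ ih₃ =>
      exact (ih₁ v hΓ).elim (fun h => ih₂ v (Set.forall_mem_insert.2 ⟨h, hΓ⟩))
        (fun h => ih₃ v (Set.forall_mem_insert.2 ⟨h, hΓ⟩))
  | falsumE _ ih => exact (ih v hΓ).elim
  | allI d ih =>
      refine ⟨iProves_subst_of_derives (Derives.allI d) fun γ hγ => (hΓ γ hγ).provable,
        fun n => comp_vcons numeral n v ▸ ih _ ?_⟩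
      rintro _ ⟨γ, hγ, rfl⟩
      exact comp_vcons numeral n v ▸ shiftF_iff.2 (hΓ γ hγ)
  | allE t _ ih => exact (subst0_numeral_iff hT hPR).2 ((ih v hΓ).2 _)
  | exI t _ ih => exact ⟨_, (subst0_numeral_iff hT hPR).1 (ih v hΓ)⟩
  | exE _ _ ih₁ ih₂ =>
      obtain ⟨n, hn⟩ := ih₁ v hΓ
      refine shiftF_iff.1 (comp_vcons numeral n v ▸ ih₂ (vcons n v) ?_)
      rintro _ (rfl | ⟨γ, hγ, rfl⟩)
      · exact comp_vcons numeral n v ▸ hn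
      · exact comp_vcons numeral n v ▸ shiftF_iff.2 (hΓ γ hγ)
  | eqRefl t => exact Derives.eqRefl _
  | eqSubst t u _ _ ih₁ ih₂ =>
      exact subst0_iff.2 ((vcons_congr (ih₁ v hΓ)).1 (subst0_iff.1 (ih₂ v hΓ)))
  | dne h _ _ => exact h.elim

theorem closeN_of_forall (hT : SubstClosed T) {k : ℕ} {φ : Formula Empty}
    (h : iProves T (closeN k φ)) (hφ : ∀ v, Slash T φ (numeral ∘ v)) (v : ℕ → ℕ) :
    Slash T (closeN k φ) (numeral ∘ v) := by
  induction k generalizing φ with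
  | zero => exact hφ v
  | succ k ih =>
      exact ih h fun w => ⟨iProves_subst_of_closeN (φ := φ.all) hT h _,
        fun n => comp_vcons numeral n w ▸ hφ (vcons n w)⟩

theorem neg_of_iProves (hT : SubstClosed T) (hcon : IConsistent T) {φ : Formula Empty}
    (h : iProves T φ.neg) (σ : ℕ → Term Empty) : Slash T φ.neg σ :=
  ⟨iProves_subst hT h σ, fun hφ => hcon (Derives.implE (iProves_subst hT h σ) hφ.provable)⟩

theorem of_indBody {φ : Formula Empty} {σ : ℕ → Term Empty}
    (h : iProves T ((indBody φ).subst σ)) : Slash T (indBody φ) σ := by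
  refine ⟨h, fun hprem => ⟨Derives.implE h hprem.provable, fun n => ?_⟩⟩
  obtain ⟨hzero, hsucc⟩ := hprem
  induction n with
  | zero =>
      rw [subst0_iff, zeroT_subst] at hzero
      exact hzero
  | succ n ih =>
      have hn := (hsucc.2 n).2 ih
      rw [subst_iff] at hn
      convert hn using 1
      funext m
      cases m <;> rfl

theorem of_mem_QAx (hT : SubstClosed T) (hN : stdModel.ModelsLSet T) (hQ : QAx ⊆ T)
    {γ : Formula Empty} (hγ : γ ∈ QAx) (v : ℕ → ℕ) : Slash T γ (numeral ∘ v) := by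
  have hprov : iProves T γ := .hyp (hQ hγ)
  rcases hγ with rfl | rfl | rfl
  · refine closeN_of_forall (k := 1) hT hprov ?_ v
    refine fun w => ⟨iProves_subst_of_closeN (k := 1) hT hprov _, fun h => ?_⟩
    rw [Slash, Formula.subst, zeroT_subst] at h
    exact Nat.succ_ne_zero _ (numeral_eq_of_iProves hN (b := 0) h)
  · refine closeN_of_forall (k := 2) hT hprov ?_ v
    refine fun w => ⟨iProves_subst_of_closeN (k := 2) hT hprov _, fun h => ?_⟩
    have hw : w 1 = w 0 := Nat.succ_injective (numeral_eq_of_iProves hN h)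
    show iProves T (.eq (numeral (w 1)) (numeral (w 0)))
    rw [hw]
    exact Derives.eqRefl _
  · refine closeN_of_forall (k := 1) hT hprov ?_ v
    intro w
    rcases hw : w 0 with _ | a
    · refine Or.inl ?_
      show iProves T (.eq (numeral (w 0)) (zeroT.subst _))
      rw [zeroT_subst, hw]
      exact Derives.eqRefl _
    · refine Or.inr ⟨a, ?_⟩
      show iProves T (.eq (numeral (w 0)) (succT (numeral a)))
      rw [hw]
      exact Derives.eqRefl _

theorem of_mem_prDefAx (hT : SubstClosed T) (hPR : prDefAx ⊆ T) {γ : Formula Empty}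
    (hγ : γ ∈ prDefAx) (v : ℕ → ℕ) : Slash T γ (numeral ∘ v) := by
  obtain ⟨k, t, u, rfl⟩ := exists_closeN_eq_of_mem_prDefAx hγ
  have hprov : iProves T (closeN k (.eq t u)) := .hyp (hPR hγ)
  exact closeN_of_forall hT hprov (fun w => iProves_subst_of_closeN hT hprov (numeral ∘ w)) v

theorem of_mem_indAxioms (hT : SubstClosed T) (hind : indAxioms ⊆ T) {γ : Formula Empty}
    (hγ : γ ∈ indAxioms) (v : ℕ → ℕ) : Slash T γ (numeral ∘ v) := by
  obtain ⟨φ, k, rfl⟩ := hγ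
  have hprov : iProves T (closeN k (indBody φ)) := .hyp (hind ⟨φ, k, rfl⟩)
  exact closeN_of_forall hT hprov
    (fun w => of_indBody (iProves_subst_of_closeN hT hprov _)) v

theorem of_mem_MPax (hT : SubstClosed T) (hN : stdModel.ModelsLSet T) (hMP : MPax ⊆ T)
    {γ : Formula Empty} (hγ : γ ∈ MPax) (v : ℕ → ℕ) : Slash T γ (numeral ∘ v) := by
  obtain ⟨φ, k, rfl⟩ := hγ
  have hprov := Derives.hyp (Γ := T) (cl := False) (hMP ⟨φ, k, rfl⟩)
  refine closeN_of_forall hT hprov ?_ v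
  refine fun w => ⟨iProves_subst_of_closeN hT hprov _, fun ⟨hdec, hnn⟩ => ?_⟩
  have hsat := Struc.modelsL_of_iProves hN hnn.provable fun _ => (0 : ℕ)
  rw [sat_subst_numeral] at hsat
  obtain ⟨a, ha⟩ := Classical.not_not.1 hsat
  refine (hdec.2 a).elim (fun h => ⟨a, h⟩) fun h => ?_
  have hna := Struc.modelsL_of_iProves hN h.provable fun _ => (0 : ℕ)
  rw [← comp_vcons numeral a w, sat_subst_numeral] at hna
  exact (hna ha).elim

end Slash

section HAMP

variable {tc : PRCode 3} {uc : PRCode 1}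

theorem isClosed_of_mem_QAx {γ : Formula Empty} (h : γ ∈ QAx) : γ.IsClosed := by
  rcases h with rfl | rfl | rfl <;>
    simp [Formula.IsClosed, Formula.fvBelow, Term.fvBelow, Formula.neg, zeroT, succT]

theorem isClosed_of_mem_prDefAx {γ : Formula Empty} (h : γ ∈ prDefAx) : γ.IsClosed := by
  obtain ⟨n, c, hc⟩ := h
  cases c <;> simp only [PRCode.defAx, List.mem_cons, List.not_mem_nil, or_false] at hc
  all_goals
    rcases hc with rfl | rfl <;>
    simp [Formula.IsClosed, Formula.fvBelow_closeN, Formula.fvBelow, Term.fvBelow, varsF,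
      Fin.forall_fin_succ, zeroT, succT]

theorem thetaSent_isClosed : (thetaSent tc uc).IsClosed := by
  simp [Formula.IsClosed, thetaSent, ectInstance, psi0, haltF, Formula.fvBelow, Term.fvBelow,
    Formula.subst, Term.subst, liftSubst, zeroT, Fin.forall_fin_succ, Formula.neg, Term.shift]

theorem substClosed_HAMPtheory : SubstClosed (HAMPtheory tc uc) := by
  rintro γ ((((hQ | hdef) | ⟨φ, k, rfl⟩) | rfl) | ⟨φ, k, rfl⟩) σ
  · rw [Formula.subst_of_isClosed (isClosed_of_mem_QAx hQ)]
    exact Or.inl (Or.inl (Or.inl (Or.inl hQ)))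
  · rw [Formula.subst_of_isClosed (isClosed_of_mem_prDefAx hdef)]
    exact Or.inl (Or.inl (Or.inl (Or.inr hdef)))
  · rw [closeN_subst, indBody_subst]
    exact Or.inl (Or.inl (Or.inr ⟨_, k, rfl⟩))
  · rw [Formula.subst_of_isClosed (φ := (thetaSent tc uc).neg) ⟨thetaSent_isClosed, trivial⟩]
    exact Or.inl (Or.inr rfl)
  · rw [closeN_subst]
    exact Or.inr ⟨_, k, rfl⟩

theorem Slash.of_iProves_HAMPtheory (hTU : KleeneTU tc uc) {φ : Formula Empty}
    (h : iProves (HAMPtheory tc uc) φ) (v : ℕ → ℕ) :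
    Slash (HAMPtheory tc uc) φ (numeral ∘ v) := by
  have hT := substClosed_HAMPtheory (tc := tc) (uc := uc)
  have hN := stdModel_modelsLSet_HAMPtheory hTU
  have hPR : prDefAx ⊆ HAMPtheory tc uc := fun _ h => Or.inl (Or.inl (Or.inl (Or.inr h)))
  refine Slash.of_derives hT hPR h v ?_
  rintro γ ((((hQ | hdef) | hind) | rfl) | hMP)
  · exact Slash.of_mem_QAx hT hN (fun _ h => Or.inl (Or.inl (Or.inl (Or.inl h)))) hQ v
  · exact Slash.of_mem_prDefAx hT hPR hdef v
  · exact Slash.of_mem_indAxioms hT (fun _ h => Or.inl (Or.inl (Or.inr h))) hind v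
  · exact Slash.neg_of_iProves hT (iConsistent_of_modelsLSet hN) (.hyp (Or.inl (Or.inr rfl))) _
  · exact Slash.of_mem_MPax hT hN (fun _ h => Or.inr h) hMP v

end HAMP

/-- HA + ¬θ + MP is consistent and has the existence and
disjunction properties. -/
theorem stmt13 (tc : PRCode 3) (uc : PRCode 1) (hTU : KleeneTU tc uc) :
    IConsistent (HAMPtheory tc uc) ∧
    (∀ ψ : Formula Empty, ψ.fvBelow 1 → iProves (HAMPtheory tc uc) (.ex ψ) →
        ∃ n : ℕ, iProves (HAMPtheory tc uc) (subst0 (numeral n) ψ)) ∧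
    (∀ φ ψ : Formula Empty, φ.IsClosed → ψ.IsClosed →
        iProves (HAMPtheory tc uc) (φ.disj ψ) →
        iProves (HAMPtheory tc uc) φ ∨ iProves (HAMPtheory tc uc) ψ) := by
  refine ⟨iConsistent_of_modelsLSet (stdModel_modelsLSet_HAMPtheory hTU),
    fun ψ hψ hex => ?_, fun φ ψ hφ hψ hdisj => ?_⟩
  · obtain ⟨n, hn⟩ := Slash.of_iProves_HAMPtheory hTU hex fun _ => 0
    have hsubst : subst0 (numeral n) ψ = ψ.subst (vcons (numeral n) (numeral ∘ fun _ => 0)) :=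
      Formula.subst_congr_fvBelow hψ fun i hi => by rw [Nat.lt_one_iff.1 hi]; rfl
    exact ⟨n, hsubst ▸ hn.provable⟩
  · rcases Slash.of_iProves_HAMPtheory hTU hdisj fun _ => 0 with h | h
    · exact Or.inl (Formula.subst_of_isClosed hφ _ ▸ h.provable)
    · exact Or.inr (Formula.subst_of_isClosed hψ _ ▸ h.provable)

end Pap
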